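/- Let d ≥ 1 and ϑ ∈ (0, π/2]. For every r > 0 there exists R ≥ r, depending only on r, ϑ and the dimension d, such that for every ϑ-bounded configuration Γ every lattice point x ∈ ℤ^d is r-R-connected in the graph G(Γ). -/

import Mathlib

open MeasureTheory Metric
open scoped ENNReal

noncomputable section

/-- `d`-dimensional Euclidean space. -/
abbrev Euc (d : ℕ) : Type := EuclideanSpace ℝ (Fin d)

/-- The open cone `Ṽ(v,θ)` with axis `v` and apex angle `θ`. -/
def coneSet (d : ℕ) (v : Euc d) (θ : ℝ) : Set (Euc d) :=
  {h | h ≠ 0 ∧ Real.cos θ < (inner ℝ v h : ℝ) / ‖h‖}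

/-- The double cone `V(v,θ) = Ṽ(v,θ) ∪ (−Ṽ(v,θ))`. -/
def doubleCone (d : ℕ) (v : Euc d) (θ : ℝ) : Set (Euc d) :=
  {h | h ∈ coneSet d v θ ∨ -h ∈ coneSet d v θ}

/-- A configuration assigns to each point of `ℝ^d` a double cone with apex at `0`,
recorded via its (unit) symmetry axis and its apex angle in `(0, π/2]`. -/
structure Config (d : ℕ) where
  axis : Euc d → Euc d
  angle : Euc d → ℝ
  axis_norm : ∀ x, ‖axis x‖ = 1
  angle_mem : ∀ x, angle x ∈ Set.Ioc 0 (Real.pi / 2)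

/-- The double cone `Γ(x)` assigned to `x` by a configuration `Γ`. -/
def Config.cone {d : ℕ} (Γ : Config d) (x : Euc d) : Set (Euc d) :=
  doubleCone d (Γ.axis x) (Γ.angle x)

/-- `Γ` is `ϑ`-bounded: every apex angle is at least `ϑ`. -/
def Config.Bounded {d : ℕ} (Γ : Config d) (ϑ : ℝ) : Prop :=
  ∀ x, ϑ ≤ Γ.angle x

/-- `Γ` is `ϑ`-admissible: `ϑ`-bounded and `{(x,y) | y - x ∈ Γ(x)}` is Borel. -/
def Config.Admissible {d : ℕ} (Γ : Config d) (ϑ : ℝ) : Prop :=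
  Γ.Bounded ϑ ∧ MeasurableSet {p : Euc d × Euc d | p.2 - p.1 ∈ Γ.cone p.1}

/-- The indicator sum `𝟙_{V^Γ[x]}(y) + 𝟙_{V^Γ[y]}(x)`, valued in `ℝ≥0∞`. -/
def indSum {d : ℕ} (Γ : Config d) (x y : Euc d) : ℝ≥0∞ :=
  (Γ.cone x).indicator (fun _ => (1 : ℝ≥0∞)) (y - x) +
  (Γ.cone y).indicator (fun _ => (1 : ℝ≥0∞)) (x - y)

/-- The kernel `|x - y| ^ (-d-α)` as an `ℝ≥0∞`-valued function (equal to `∞` on the diagonal). -/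
def stbl (d : ℕ) (α : ℝ) (x y : Euc d) : ℝ≥0∞ :=
  (ENNReal.ofReal (dist x y)) ^ (-(d : ℝ) - α)

/-- The embedding of the integer lattice `ℤ^d` into `ℝ^d`. -/
def latt (d : ℕ) (z : Fin d → ℤ) : Euc d :=
  (WithLp.equiv 2 (Fin d → ℝ)).symm (fun i => (z i : ℝ))

/-- The open cube `A_h(u)` of side length `h` centered at `u` (w.r.t. the max norm). -/
def cube (d : ℕ) (h : ℝ) (u : Euc d) : Set (Euc d) :=
  {x | ∀ i, |x i - u i| < h / 2}

/-- The translate `V[x] = V + x` of a set `V`. -/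
def shiftSet (d : ℕ) (V : Set (Euc d)) (x : Euc d) : Set (Euc d) :=
  {y | y - x ∈ V}

/-- The "half-set" `V_r = {y ∈ V | closedBall y r ⊆ V}` (double half-cone for `V` a double cone). -/
def halfSet (d : ℕ) (V : Set (Euc d)) (r : ℝ) : Set (Euc d) :=
  {y | y ∈ V ∧ Metric.closedBall y r ⊆ V}

/-- Adjacency of `w` and `z` in the (undirected) graph `G_U(Γ)`. -/
def adjIn (d : ℕ) (Γ : Config d) (U : Set (Euc d)) (w z : Euc d) : Prop :=
  (w ∈ U ∧ z - w ∈ Γ.cone w) ∨ (z ∈ U ∧ w - z ∈ Γ.cone z)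

/-- Adjacency of two lattice points in the graph `G(Γ)`. -/
def adjL (d : ℕ) (Γ : Config d) (w z : Fin d → ℤ) : Prop :=
  latt d z - latt d w ∈ Γ.cone (latt d w) ∨ latt d w - latt d z ∈ Γ.cone (latt d z)

/-- A lattice point `x` is `r`-`R`-connected if every lattice point within distance `r`
is connected to `x` by an undirected edge path in `G(Γ)` staying in the closed `R`-ball
around `x`. -/
def rRConnected (d : ℕ) (Γ : Config d) (r R : ℝ) (x : Fin d → ℤ) : Prop :=
  ∀ y : Fin d → ℤ, dist (latt d y) (latt d x) ≤ r →
    ∃ (N : ℕ) (p : ℕ → Fin d → ℤ), p 0 = x ∧ p N = y ∧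
      (∀ i < N, adjL d Γ (p i) (p (i + 1))) ∧
      ∀ i ≤ N, dist (latt d (p i)) (latt d x) ≤ R

/-- Sum over pairs of lattice points satisfying a predicate `P` of
`(f x - f y)² K x y`, valued in `ℝ≥0∞`. -/
def dSum (d : ℕ) (f : (Fin d → ℤ) → ℝ) (K : (Fin d → ℤ) → (Fin d → ℤ) → ℝ≥0∞)
    (P : (Fin d → ℤ) → (Fin d → ℤ) → Prop) : ℝ≥0∞ :=
  ∑' q : (Fin d → ℤ) × (Fin d → ℤ),
    Set.indicator {q : (Fin d → ℤ) × (Fin d → ℤ) | P q.1 q.2}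
      (fun q => ENNReal.ofReal ((f q.1 - f q.2) ^ 2) * K q.1 q.2) q

/-!
From a lattice point `p`, aim a long way along the axis `±b` of `Γ(p)`, tilted slightly towards
a target `Y`, and round to the lattice: the rounding error is too small to leave the cone, so
this is an edge of `G(Γ)`, and when `p` is far from `Y` it brings `p` at least `1/2` closer
to `Y`. To reach `y`, take `Y = y + T a` with `a` the axis of `Γ(y)`; for `T` large, the
whole ball of the stopping radius around `Y` lies in `y + Γ(y)`. Greedy steps from `x` thus
reach `y` without ever moving further from `Y` than `x` or `y` is.
-/

open scoped RealInnerProductSpace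

def JoinedWithin {α : Type*} (Adj : α → α → Prop) (P : α → Prop) (a b : α) : Prop :=
  ∃ (N : ℕ) (q : ℕ → α), q 0 = a ∧ q N = b ∧ (∀ i < N, Adj (q i) (q (i + 1))) ∧
    ∀ i ≤ N, P (q i)

namespace JoinedWithin

variable {α : Type*} {Adj : α → α → Prop} {P Q : α → Prop} {a b c : α}

theorem refl (ha : P a) : JoinedWithin Adj P a a :=
  ⟨0, fun _ => a, rfl, rfl, fun _ h => absurd h (Nat.not_lt_zero _), fun _ _ => ha⟩

theorem cons (hab : Adj a b) (ha : P a) (h : JoinedWithin Adj P b c) :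
    JoinedWithin Adj P a c := by
  obtain ⟨N, q, hq0, hqN, hadj, hP⟩ := h
  refine ⟨N + 1, fun i => Nat.casesOn i a q, rfl, hqN, ?_, ?_⟩
  · rintro (_ | i) hi
    · simpa [hq0] using hab
    · exact hadj i (by omega)
  · rintro (_ | i) hi
    · exact ha
    · exact hP i (by omega)

theorem single (hab : Adj a b) (ha : P a) (hb : P b) : JoinedWithin Adj P a b :=
  cons hab ha (refl hb)

theorem mono (hPQ : ∀ x, P x → Q x) (h : JoinedWithin Adj P a b) : JoinedWithin Adj Q a b := by
  obtain ⟨N, q, hq0, hqN, hadj, hP⟩ := h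
  exact ⟨N, q, hq0, hqN, hadj, fun i hi => hPQ _ (hP i hi)⟩

theorem of_descent (f : α → ℝ) {z : α} {D μ : ℝ} (hμ : 0 < μ)
    (hstep : ∀ p, D < f p → ∃ p', Adj p p' ∧ f p' ≤ f p - μ)
    (hfinal : ∀ p, f p ≤ D → Adj p z) (p : α) :
    JoinedWithin Adj (fun q => f q ≤ max (f p) (f z)) p z := by
  suffices key : ∀ n : ℕ, ∀ p, f p ≤ D + n * μ →
      JoinedWithin Adj (fun q => f q ≤ max (f p) (f z)) p z by
    obtain ⟨n, hn⟩ := exists_nat_ge ((f p - D) / μ)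
    exact key n p (by rw [div_le_iff₀ hμ] at hn; linarith)
  intro n
  induction n with
  | zero =>
    exact fun p hp => single (hfinal p (by simpa using hp)) (le_max_left _ _) (le_max_right _ _)
  | succ n ih =>
    intro p hp
    rcases le_or_gt (f p) D with hnear | hfar
    · exact single (hfinal p hnear) (le_max_left _ _) (le_max_right _ _)
    obtain ⟨p', hadj, hp'⟩ := hstep p hfar
    refine cons hadj (le_max_left _ _) ((ih p' ?_).mono fun q hq => hq.trans ?_)
    · push_cast at hp
      linarith
    · exact max_le_max_right _ (by linarith)

end JoinedWithin

section InnerProductSpace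

variable {E : Type*} [NormedAddCommGroup E] [InnerProductSpace ℝ E]

theorem inner_sub_le_inner_of_norm_sub_le {v w ξ : E} {ρ : ℝ} (hv : ‖v‖ = 1)
    (hξ : ‖ξ - w‖ ≤ ρ) : ⟪v, w⟫ - ρ ≤ ⟪v, ξ⟫ := by
  have h := abs_real_inner_le_norm v (ξ - w)
  rw [inner_sub_right, hv, one_mul] at h
  linarith [neg_abs_le (⟪v, ξ⟫ - ⟪v, w⟫)]

theorem mul_norm_lt_inner_of_norm_sub_le {v w ξ : E} {c ρ : ℝ} (hv : ‖v‖ = 1) (hc₀ : 0 ≤ c)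
    (hc₁ : c ≤ 1) (hξ : ‖ξ - w‖ ≤ ρ) (h : c * ‖w‖ + 2 * ρ < ⟪v, w⟫) :
    c * ‖ξ‖ < ⟪v, ξ⟫ := by
  have hρ : 0 ≤ ρ := (norm_nonneg _).trans hξ
  have hnorm : ‖ξ‖ ≤ ‖w‖ + ρ := (norm_le_insert' ξ w).trans (by linarith)
  have hinner := inner_sub_le_inner_of_norm_sub_le hv hξ
  nlinarith [mul_le_mul_of_nonneg_left hnorm hc₀, mul_le_of_le_one_left hρ hc₁]

theorem dist_add_le_sub_half {P Y ξ : E} {L : ℝ} (hξ : ‖ξ‖ ≤ L)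
    (hin : 1 ≤ ⟪ξ, ‖Y - P‖⁻¹ • (Y - P)⟫) (hfar : L ^ 2 < dist P Y) :
    dist (P + ξ) Y ≤ dist P Y - 1 / 2 := by
  set D := dist P Y
  have hD : ‖Y - P‖ = D := by rw [← dist_eq_norm, dist_comm]
  have hDpos : 0 < D := (sq_nonneg L).trans_lt hfar
  have hn : ‖‖Y - P‖⁻¹ • (Y - P)‖ = 1 :=
    norm_smul_inv_norm (by rw [← norm_pos_iff, hD]; exact hDpos)
  have hL : 1 ≤ L := by
    have := real_inner_le_norm ξ (‖Y - P‖⁻¹ • (Y - P))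
    rw [hn, mul_one] at this
    linarith
  have hinner : D ≤ ⟪ξ, Y - P⟫ := by
    rw [real_inner_smul_right, hD, inv_mul_eq_div, le_div_iff₀ hDpos, one_mul] at hin
    exact hin
  have hsq : dist (P + ξ) Y ^ 2 ≤ (D - 1 / 2) ^ 2 := by
    rw [dist_eq_norm, show P + ξ - Y = ξ - (Y - P) by abel, norm_sub_sq_real, hD]
    nlinarith [norm_nonneg ξ]
  exact le_of_pow_le_pow_left₀ two_ne_zero (by nlinarith) hsq

theorem exists_cone_step_of_net {S : Set E} {ρ c : ℝ} (hS : ∀ Y, ∃ Q ∈ S, dist Q Y ≤ ρ)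
    (hc₀ : 0 ≤ c) (hc₁ : c < 1) :
    ∃ L, ∀ P b n : E, ‖b‖ = 1 → ‖n‖ = 1 →
      ∃ Q ∈ S, c * ‖Q - P‖ < |⟪b, Q - P⟫| ∧ 1 ≤ ⟪Q - P, n⟫ ∧ ‖Q - P‖ ≤ L := by
  have hρ : 0 ≤ ρ := by
    obtain ⟨Q, -, hQ⟩ := hS 0
    exact dist_nonneg.trans hQ
  set ε := 1 - c
  have hε : 0 < ε := by linarith
  -- `s` makes the cone margin `ε * s / 2` of `w` below exceed twice the rounding error `ρ`
  set s := 2 * (2 * ρ + 1) / ε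
  have hεs : ε * s = 2 * (2 * ρ + 1) := mul_div_cancel₀ _ hε.ne'
  have hs : 0 ≤ s := by positivity
  refine ⟨2 * s + ρ, fun P b n hb hn => ?_⟩
  obtain ⟨b', hb', hb'n, hb'_le⟩ :
      ∃ b' : E, ‖b'‖ = 1 ∧ 0 ≤ ⟪b', n⟫ ∧ ∀ ξ, ⟪b', ξ⟫ ≤ |⟪b, ξ⟫| := by
    rcases le_total 0 ⟪b, n⟫ with h | h
    · exact ⟨b, hb, h, fun ξ => le_abs_self _⟩
    · refine ⟨-b, by rwa [norm_neg], by rw [inner_neg_left]; linarith, fun ξ => ?_⟩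
      rw [inner_neg_left]
      exact neg_le_abs _
  set w := s • (b' + (ε / 2) • n)
  obtain ⟨Q, hQS, hQ⟩ := hS (P + w)
  have hξw : ‖(Q - P) - w‖ ≤ ρ := by rwa [sub_sub, ← dist_eq_norm]
  have hbw : s ≤ ⟪b', w⟫ := by
    rw [real_inner_smul_right, inner_add_right, real_inner_smul_right, real_inner_self_eq_norm_sq,
      hb']
    nlinarith [mul_nonneg hs (mul_nonneg hε.le hb'n)]
  have hwn : 2 * ρ + 1 ≤ ⟪w, n⟫ := by
    rw [real_inner_smul_left, inner_add_left, real_inner_smul_left, real_inner_self_eq_norm_sq, hn]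
    nlinarith [mul_nonneg hs hb'n]
  have hw : ‖w‖ ≤ s * (1 + ε / 2) := by
    rw [norm_smul, Real.norm_of_nonneg hs]
    gcongr
    calc ‖b' + (ε / 2) • n‖ ≤ ‖b'‖ + ‖(ε / 2) • n‖ := norm_add_le _ _
      _ = 1 + ε / 2 := by rw [hb', norm_smul, hn, Real.norm_of_nonneg (by positivity), mul_one]
  refine ⟨Q, hQS, ?_, ?_, ?_⟩
  · refine (mul_norm_lt_inner_of_norm_sub_le hb' hc₀ hc₁.le hξw ?_).trans_le (hb'_le _)
    nlinarith [mul_le_mul_of_nonneg_left hw hc₀, mul_nonneg hs (sq_nonneg ε)]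
  · have := inner_sub_le_inner_of_norm_sub_le hn hξw
    rw [real_inner_comm w n, real_inner_comm (Q - P) n] at this
    linarith
  · calc ‖Q - P‖ ≤ ‖w‖ + ‖(Q - P) - w‖ := norm_le_insert' _ _
      _ ≤ 2 * s + ρ := by nlinarith

end InnerProductSpace

theorem exists_latt_dist_le (d : ℕ) (Y : Euc d) :
    ∃ z : Fin d → ℤ, dist (latt d z) Y ≤ Real.sqrt d := by
  refine ⟨fun i => round (Y i), ?_⟩
  rw [EuclideanSpace.dist_eq]
  refine Real.sqrt_le_sqrt ?_
  calc ∑ i, dist (latt d (fun i => round (Y i)) i) (Y i) ^ 2 ≤ ∑ _i : Fin d, (1 : ℝ) := by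
        gcongr with i
        have h : |(round (Y i) : ℝ) - Y i| ≤ 1 / 2 := by
          rw [abs_sub_comm]
          exact abs_sub_round (Y i)
        rw [Real.dist_eq]
        change |(round (Y i) : ℝ) - Y i| ^ 2 ≤ 1
        nlinarith [abs_nonneg ((round (Y i) : ℝ) - Y i)]
    _ = d := by simp

theorem mem_doubleCone_of_mul_norm_lt_abs_inner {d : ℕ} {v ξ : Euc d} {θ : ℝ}
    (h : Real.cos θ * ‖ξ‖ < |⟪v, ξ⟫|) : ξ ∈ doubleCone d v θ := by
  have hξ : ξ ≠ 0 := by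
    rintro rfl
    simp at h
  have hpos : 0 < ‖ξ‖ := norm_pos_iff.mpr hξ
  rcases le_total 0 ⟪v, ξ⟫ with hv | hv
  · rw [abs_of_nonneg hv] at h
    exact Or.inl ⟨hξ, (lt_div_iff₀ hpos).mpr h⟩
  · rw [abs_of_nonpos hv] at h
    refine Or.inr ⟨neg_ne_zero.mpr hξ, ?_⟩
    rw [inner_neg_right, norm_neg, lt_div_iff₀ hpos]
    exact h

theorem cos_mem_Ico_of_mem_Ioc {ϑ : ℝ} (hϑ : ϑ ∈ Set.Ioc 0 (Real.pi / 2)) :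
    Real.cos ϑ ∈ Set.Ico 0 1 :=
  ⟨Real.cos_nonneg_of_mem_Icc ⟨by linarith [hϑ.1, Real.pi_pos], hϑ.2⟩,
    by simpa using Real.cos_lt_cos_of_nonneg_of_le_pi le_rfl (by linarith [hϑ.2, Real.pi_pos]) hϑ.1⟩

namespace Config

variable {d : ℕ} {Γ : Config d} {ϑ : ℝ}

theorem mem_cone_of_bounded (hΓ : Γ.Bounded ϑ) (hϑ : 0 ≤ ϑ) {w ξ : Euc d}
    (h : Real.cos ϑ * ‖ξ‖ < |⟪Γ.axis w, ξ⟫|) : ξ ∈ Γ.cone w := by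
  refine mem_doubleCone_of_mul_norm_lt_abs_inner (lt_of_le_of_lt ?_ h)
  gcongr
  exact Real.cos_le_cos_of_nonneg_of_le_pi hϑ
    (by linarith [(Γ.angle_mem w).2, Real.pi_pos]) (hΓ w)

theorem adjL_of_dist_le (hΓ : Γ.Bounded ϑ) (hϑ : ϑ ∈ Set.Ioc 0 (Real.pi / 2)) {ρ T : ℝ}
    (hT : Real.cos ϑ * T + 2 * ρ < T) {p y : Fin d → ℤ}
    (h : dist (latt d p) (latt d y + T • Γ.axis (latt d y)) ≤ ρ) : adjL d Γ p y := by
  have ha := Γ.axis_norm (latt d y)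
  have hc₀ := (cos_mem_Ico_of_mem_Ioc hϑ).1
  have hT₀ : 0 ≤ T := by
    nlinarith [dist_nonneg.trans h, Real.cos_le_one ϑ]
  refine Or.inr (mem_cone_of_bounded hΓ hϑ.1.le ?_)
  have hξ : ‖(latt d p - latt d y) - T • Γ.axis (latt d y)‖ ≤ ρ := by
    rwa [sub_sub, ← dist_eq_norm]
  refine (mul_norm_lt_inner_of_norm_sub_le ha hc₀ (Real.cos_le_one ϑ) hξ ?_).trans_le
    (le_abs_self _)
  rwa [norm_smul, real_inner_smul_right, real_inner_self_eq_norm_sq, ha, Real.norm_of_nonneg hT₀,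
    one_pow, mul_one]

theorem exists_adjL_dist_le_sub_half (hϑ : ϑ ∈ Set.Ioc 0 (Real.pi / 2)) :
    ∃ D, 0 ≤ D ∧ ∀ Γ : Config d, Γ.Bounded ϑ → ∀ (p : Fin d → ℤ) (Y : Euc d),
      D < dist (latt d p) Y → ∃ p', adjL d Γ p p' ∧
        dist (latt d p') Y ≤ dist (latt d p) Y - 1 / 2 := by
  obtain ⟨hc₀, hc₁⟩ := cos_mem_Ico_of_mem_Ioc hϑ
  obtain ⟨L, hL⟩ := exists_cone_step_of_net (S := Set.range (latt d))
    (fun Y => (exists_latt_dist_le d Y).elim fun z hz => ⟨latt d z, ⟨z, rfl⟩, hz⟩) hc₀ hc₁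
  refine ⟨L ^ 2, sq_nonneg L, fun Γ hΓ p Y hfar => ?_⟩
  have hYp : Y - latt d p ≠ 0 := by
    rw [sub_ne_zero]
    rintro rfl
    rw [dist_self] at hfar
    linarith [sq_nonneg L]
  obtain ⟨_, ⟨p', rfl⟩, hcone, hin, hle⟩ := hL (latt d p) (Γ.axis (latt d p))
    (‖Y - latt d p‖⁻¹ • (Y - latt d p)) (Γ.axis_norm _) (norm_smul_inv_norm hYp)
  refine ⟨p', Or.inl (mem_cone_of_bounded hΓ hϑ.1.le hcone), ?_⟩
  simpa using dist_add_le_sub_half hle hin hfar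

end Config

theorem rRConnected_iff {d : ℕ} {Γ : Config d} {r R : ℝ} {x : Fin d → ℤ} :
    rRConnected d Γ r R x ↔ ∀ y : Fin d → ℤ, dist (latt d y) (latt d x) ≤ r →
      JoinedWithin (adjL d Γ) (fun z => dist (latt d z) (latt d x) ≤ R) x y :=
  Iff.rfl

theorem stmt18_general (d : ℕ) (ϑ : ℝ) (hϑ : ϑ ∈ Set.Ioc 0 (Real.pi / 2))
    (r : ℝ) (hr : 0 < r) :
    ∃ R : ℝ, r ≤ R ∧ ∀ Γ : Config d, Γ.Bounded ϑ →
      ∀ x : Fin d → ℤ, rRConnected d Γ r R x := by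
  obtain ⟨D, hD, hstep⟩ := Config.exists_adjL_dist_le_sub_half (d := d) hϑ
  have hc₁ := (cos_mem_Ico_of_mem_Ioc hϑ).2
  set T := (2 * D + 1) / (1 - Real.cos ϑ)
  have hεT : (1 - Real.cos ϑ) * T = 2 * D + 1 := mul_div_cancel₀ _ (by linarith)
  have hT : 0 < T := div_pos (by linarith) (by linarith)
  have hTD : Real.cos ϑ * T + 2 * D < T := by nlinarith
  refine ⟨2 * (r + T), by linarith, fun Γ hΓ x => rRConnected_iff.mpr fun y hy => ?_⟩
  set Y := latt d y + T • Γ.axis (latt d y)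
  have hyY : dist (latt d y) Y = T := by
    rw [dist_self_add_right, norm_smul, Γ.axis_norm, mul_one, Real.norm_of_nonneg hT.le]
  have hxY : dist (latt d x) Y ≤ r + T := by
    linarith [dist_triangle (latt d x) (latt d y) Y, dist_comm (latt d x) (latt d y)]
  refine (JoinedWithin.of_descent (fun p => dist (latt d p) Y) one_half_pos (hstep Γ hΓ · Y)
    (fun p hp => Γ.adjL_of_dist_le hΓ hϑ hTD hp) x).mono fun p hp => ?_
  have hpY : dist (latt d p) Y ≤ r + T := hp.trans (max_le hxY (by linarith))
  linarith [dist_triangle_right (latt d p) (latt d x) Y]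

/-- Corollary 5.8: for every `r > 0` there is `R ≥ r`, depending only on
`r`, `ϑ` and `d`, such that for every `ϑ`-bounded configuration every lattice point is
`r`-`R`-connected. -/
theorem stmt18 (d : ℕ) (hd : 1 ≤ d) (ϑ : ℝ) (hϑ : ϑ ∈ Set.Ioc 0 (Real.pi / 2))
    (r : ℝ) (hr : 0 < r) :
    ∃ R : ℝ, r ≤ R ∧ ∀ Γ : Config d, Γ.Bounded ϑ →
      ∀ x : Fin d → ℤ, rRConnected d Γ r R x :=
  stmt18_general d ϑ hϑ r hr
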